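/- Let D be a symmetric positive definite M×M real matrix. There exists an orthonormal basis b_1,…,b_{M-1} of the hyperplane Υ = {x : x_M = 0} and a unit vector b_M = Dn/|Dn| (with n = e_M) such that in the basis (b_1,…,b_M) the bilinear form associated to D is diagonal with strictly positive diagonal entries. -/

import Mathlib

/-!
Eliminating the last coordinate with the pivot `d = D_MM` splits `D` as
`E + d⁻¹ v vᵀ` with `v = D e_M`, where `E` vanishes on the last row and column. The block of
`E` on the hyperplane is the Schur complement, which is positive definite: for `x ≠ 0`, choosing
the last coordinate `t` so that `(D y)_M = 0` for `y = (x, t)` gives `xᵀ 𝔇 x = yᵀ D y > 0`.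
An orthonormal eigenbasis of the Schur complement, extended by zero, diagonalizes `E`, and the
rank-one term `d⁻¹ v vᵀ` equals `(|v|² / d) b_M b_Mᵀ`.
-/

open Matrix
open scoped ComplexOrder

namespace Matrix.IsHermitian

variable {𝕜 n : Type*} [RCLike 𝕜] [Fintype n] [DecidableEq n] {A : Matrix n n 𝕜}

theorem apply_eq_sum_eigenvalues (hA : A.IsHermitian) (i j : n) :
    A i j = ∑ k, (hA.eigenvalues k : 𝕜) * hA.eigenvectorBasis k i *
      star (hA.eigenvectorBasis k j) := by
  conv_lhs => rw [hA.spectral_theorem]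
  rw [Unitary.conjStarAlgAut_apply, mul_apply]
  refine Finset.sum_congr rfl fun k _ => ?_
  simp [mul_comm]

theorem sum_star_eigenvectorBasis_mul (hA : A.IsHermitian) (k l : n) :
    ∑ i, star (hA.eigenvectorBasis k i) * hA.eigenvectorBasis l i = if k = l then 1 else 0 := by
  rw [← orthonormal_iff_ite.mp hA.eigenvectorBasis.orthonormal k l]
  simp [PiLp.inner_apply, mul_comm]

end Matrix.IsHermitian

namespace Matrix

variable {K : Type*} {n : ℕ}

theorem star_snoc_dotProduct_mulVec_snoc [CommSemiring K] [StarRing K]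
    {E : Matrix (Fin (n + 1)) (Fin (n + 1)) K}
    (h_right : ∀ i, E i (Fin.last n) = 0) (h_left : ∀ j, E (Fin.last n) j = 0)
    (x : Fin n → K) (t : K) :
    star (Fin.snoc x t : Fin (n + 1) → K) ⬝ᵥ (E *ᵥ Fin.snoc x t) =
      star x ⬝ᵥ (E.submatrix Fin.castSucc Fin.castSucc *ᵥ x) := by
  simp [dotProduct, mulVec, Fin.sum_univ_castSucc, h_right, h_left]

theorem apply_eq_sum_snoc_of_submatrix [NonUnitalNonAssocSemiring K] {ι : Type*} [Fintype ι]
    {E : Matrix (Fin (n + 1)) (Fin (n + 1)) K}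
    (h_right : ∀ i, E i (Fin.last n) = 0) (h_left : ∀ j, E (Fin.last n) j = 0)
    {c : ι → K} {u : ι → Fin n → K}
    (hE : ∀ i j, E i.castSucc j.castSucc = ∑ γ, c γ * u γ i * u γ j) (k l : Fin (n + 1)) :
    E k l = ∑ γ, c γ * Fin.snoc (α := fun _ => K) (u γ) 0 k *
      Fin.snoc (α := fun _ => K) (u γ) 0 l := by
  induction k using Fin.lastCases with
  | last => simp [h_left]
  | cast i =>
    induction l using Fin.lastCases with
    | last => simp [h_right]
    | cast j => simp [hE]

section Field

variable [Field K]

def eliminateLast (A : Matrix (Fin (n + 1)) (Fin (n + 1)) K) :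
    Matrix (Fin (n + 1)) (Fin (n + 1)) K :=
  A - (A (Fin.last n) (Fin.last n))⁻¹ • vecMulVec (A.col (Fin.last n)) (A.row (Fin.last n))

/-- The paper's `𝔇`. -/
def lastSchurComplement (A : Matrix (Fin (n + 1)) (Fin (n + 1)) K) : Matrix (Fin n) (Fin n) K :=
  A.eliminateLast.submatrix Fin.castSucc Fin.castSucc

variable {A : Matrix (Fin (n + 1)) (Fin (n + 1)) K}

theorem eliminateLast_apply (i j : Fin (n + 1)) :
    A.eliminateLast i j =
      A i j - A i (Fin.last n) * A (Fin.last n) j / A (Fin.last n) (Fin.last n) := by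
  simp only [eliminateLast, sub_apply, smul_apply, vecMulVec_apply, col_apply, row_apply,
    smul_eq_mul]
  ring

theorem apply_eq_eliminateLast_add (i j : Fin (n + 1)) :
    A i j = A.eliminateLast i j +
      A i (Fin.last n) * A (Fin.last n) j / A (Fin.last n) (Fin.last n) := by
  rw [eliminateLast_apply, sub_add_cancel]

theorem eliminateLast_apply_last_right (hA : A (Fin.last n) (Fin.last n) ≠ 0) (i : Fin (n + 1)) :
    A.eliminateLast i (Fin.last n) = 0 := by
  rw [eliminateLast_apply, mul_div_assoc, div_self hA, mul_one, sub_self]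

theorem eliminateLast_apply_last_left (hA : A (Fin.last n) (Fin.last n) ≠ 0) (j : Fin (n + 1)) :
    A.eliminateLast (Fin.last n) j = 0 := by
  rw [eliminateLast_apply, mul_div_right_comm, div_self hA, one_mul, sub_self]

theorem mulVec_eliminateLast {y : Fin (n + 1) → K} (hy : (A *ᵥ y) (Fin.last n) = 0) :
    A.eliminateLast *ᵥ y = A *ᵥ y := by
  rw [mulVec] at hy
  simp only [← row_apply] at hy
  simp [eliminateLast, sub_mulVec, smul_mulVec, vecMulVec_mulVec, hy]

end Field

variable [RCLike K] {A : Matrix (Fin (n + 1)) (Fin (n + 1)) K}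

theorem IsHermitian.eliminateLast (hA : A.IsHermitian) : A.eliminateLast.IsHermitian := by
  have hrow : star (A.row (Fin.last n)) = A.col (Fin.last n) := by
    ext i; simpa using hA.apply i (Fin.last n)
  have hpivot : star (A (Fin.last n) (Fin.last n))⁻¹ = (A (Fin.last n) (Fin.last n))⁻¹ := by
    rw [star_inv₀, hA.apply]
  rw [Matrix.eliminateLast, IsHermitian, conjTranspose_sub, conjTranspose_smul, hA.eq, hpivot,
    conjTranspose_vecMulVec, hrow, ← hrow, star_star]

theorem PosDef.lastSchurComplement (hA : A.PosDef) : A.lastSchurComplement.PosDef := by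
  have hd := hA.diag_pos (i := Fin.last n)
  refine .of_dotProduct_mulVec_pos (hA.isHermitian.eliminateLast.submatrix _) fun x hx => ?_
  set t : K := -(∑ j, A (Fin.last n) j.castSucc * x j) / A (Fin.last n) (Fin.last n)
  have hy : (A *ᵥ Fin.snoc x t) (Fin.last n) = 0 := by
    simp only [t, mulVec, dotProduct, Fin.sum_univ_castSucc, Fin.snoc_castSucc, Fin.snoc_last]
    field_simp
    ring
  have hy0 : (Fin.snoc x t : Fin (n + 1) → K) ≠ 0 := fun h => hx <| by
    ext j; simpa using congr_fun h j.castSucc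
  have := hA.dotProduct_mulVec_pos hy0
  rwa [← mulVec_eliminateLast hy, star_snoc_dotProduct_mulVec_snoc
    (eliminateLast_apply_last_right hd.ne') (eliminateLast_apply_last_left hd.ne')] at this

theorem PosDef.exists_eliminateLast_eq_sum {A : Matrix (Fin (n + 1)) (Fin (n + 1)) ℝ}
    (hA : A.PosDef) :
    ∃ (c : Fin n → ℝ) (u : Fin n → Fin n → ℝ), (∀ γ, 0 < c γ) ∧
      (∀ γ γ', ∑ k, u γ k * u γ' k = if γ = γ' then 1 else 0) ∧
      ∀ k l, A.eliminateLast k l = ∑ γ, c γ * Fin.snoc (α := fun _ => ℝ) (u γ) 0 k *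
        Fin.snoc (α := fun _ => ℝ) (u γ) 0 l := by
  have hS := hA.lastSchurComplement
  have hd := hA.diag_pos (i := Fin.last n)
  refine ⟨hS.1.eigenvalues, fun γ => hS.1.eigenvectorBasis γ, hS.eigenvalues_pos,
    fun γ γ' => by simpa using hS.1.sum_star_eigenvectorBasis_mul γ γ',
    apply_eq_sum_snoc_of_submatrix (eliminateLast_apply_last_right hd.ne')
      (eliminateLast_apply_last_left hd.ne') fun i j => ?_⟩
  simpa [Matrix.lastSchurComplement] using hS.1.apply_eq_sum_eigenvalues i j

end Matrix

/-- There is a basis consisting of an orthonormal basis of the hyperplane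
`{x : x_M = 0}` together with the unit vector `b_M = D n / |D n|` (with
`n = e_M`) in which the bilinear form associated to the symmetric positive
definite matrix `D` is diagonal with strictly positive diagonal entries, i.e.
`D = ∑ i 𝒟 i • (b i ⊗ b i)` with `𝒟 i > 0`. -/
theorem diagonalizing_basis_with_boundary_vector (M : ℕ)
    (D : Matrix (Fin (M + 1)) (Fin (M + 1)) ℝ) (hD : D.PosDef) :
    ∃ (b : Fin (M + 1) → (Fin (M + 1) → ℝ)) (𝒟 : Fin (M + 1) → ℝ),
      (∀ i, 0 < 𝒟 i) ∧
      (∀ γ : Fin M, b γ.castSucc (Fin.last M) = 0) ∧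
      (∀ γ γ' : Fin M,
        ∑ k, b γ.castSucc k * b γ'.castSucc k = if γ = γ' then 1 else 0) ∧
      (b (Fin.last M) = fun i =>
        D.mulVec (Pi.single (Fin.last M) 1) i /
          Real.sqrt (∑ k, (D.mulVec (Pi.single (Fin.last M) 1) k) ^ 2)) ∧
      (∀ k l, D k l = ∑ i, 𝒟 i * b i k * b i l) := by
  obtain ⟨c, u, hc, hu, hE⟩ := hD.exists_eliminateLast_eq_sum
  set v := D *ᵥ Pi.single (Fin.last M) 1
  have hv (i : Fin (M + 1)) : v i = D i (Fin.last M) :=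
    congr_fun (mulVec_single_one D (Fin.last M)) i
  have hd : 0 < D (Fin.last M) (Fin.last M) := hD.diag_pos
  set s := ∑ k, v k ^ 2
  have hs : 0 < s := (pow_pos (hv (Fin.last M) ▸ hd) 2).trans_le
    (Finset.single_le_sum (fun k _ => sq_nonneg (v k)) (Finset.mem_univ _))
  refine ⟨Fin.lastCases (fun i => v i / √s) fun γ => Fin.snoc (u γ) 0,
    Fin.lastCases (s / D (Fin.last M) (Fin.last M)) c, ?_, ?_, ?_, Fin.lastCases_last, ?_⟩
  · intro i
    induction i using Fin.lastCases with
    | last => simpa using div_pos hs hd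
    | cast γ => simpa using hc γ
  · simp
  · intro γ γ'
    simpa [Fin.sum_univ_castSucc] using hu γ γ'
  · intro k l
    have hsym : D (Fin.last M) l = v l := by
      simpa [hv] using hD.isHermitian.apply l (Fin.last M)
    rw [apply_eq_eliminateLast_add (A := D), hE, Fin.sum_univ_castSucc, ← hv k, hsym]
    simp only [Fin.lastCases_castSucc, Fin.lastCases_last]
    congr 1
    field_simp
    rw [Real.sq_sqrt hs.le]
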